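/- arXiv:2207.03271 — 4 statements merged into one kernel-verified Lean document; each statement's English description precedes it below -/
import Mathlib

section
/- Let G be a cancellative 3-uniform hypergraph with at least one edge. Then λ^(1)(G) = 1/9. -/
open Finset

/-- A 3-uniform hypergraph on vertex set `Fin n`, given by its edge set:
every edge is a 3-element subset. -/
def IsThreeGraph {n : ℕ} (E : Finset (Finset (Fin n))) : Prop :=
  ∀ e ∈ E, e.card = 3

/-- `G` is cancellative: there are no three distinct edges `A, B, C` with `B △ C ⊆ A`. -/
def Cancellative {n : ℕ} (E : Finset (Finset (Fin n))) : Prop :=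
  ∀ A ∈ E, ∀ B ∈ E, ∀ C ∈ E, A ≠ B → A ≠ C → B ≠ C → ¬ (symmDiff B C ⊆ A)

/-- The `p`-norm of a vector `x ∈ ℝ^n`. -/
noncomputable def pNorm {n : ℕ} (p : ℝ) (x : Fin n → ℝ) : ℝ :=
  (∑ i, |x i| ^ p) ^ (1 / p)

/-- The polynomial form of a 3-graph. -/
noncomputable def polyForm {n : ℕ} (E : Finset (Finset (Fin n))) (x : Fin n → ℝ) : ℝ :=
  3 * ∑ e ∈ E, ∏ i ∈ e, x i

/-- The `p`-spectral radius of a 3-graph: the maximum of the polynomial form over the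
unit sphere of the `p`-norm. -/
noncomputable def specRad {n : ℕ} (p : ℝ) (E : Finset (Finset (Fin n))) : ℝ :=
  sSup {r : ℝ | ∃ x : Fin n → ℝ, pNorm p x = 1 ∧ polyForm E x = r}

/-- The part (among the three parts of sizes ⌊n/3⌋, ⌊(n+1)/3⌋, ⌊(n+2)/3⌋) containing vertex `i`. -/
def part3 (n : ℕ) (i : Fin n) : Fin 3 :=
  if (i : ℕ) < n / 3 then 0 else if (i : ℕ) < n / 3 + (n + 1) / 3 then 1 else 2

/-- The complete 3-partite 3-graph `T_3(n)` with part sizes ⌊n/3⌋, ⌊(n+1)/3⌋, ⌊(n+2)/3⌋: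
edges are the triples having exactly one vertex in each part. -/
def T3 (n : ℕ) : Finset (Finset (Fin n)) :=
  Finset.univ.filter fun e => ∀ k : Fin 3, (e.filter fun i => part3 n i = k).card = 1

/-- `t_3(n)`, the number of edges of `T_3(n)`. -/
def t3 (n : ℕ) : ℕ := (n / 3) * ((n + 1) / 3) * ((n + 2) / 3)

/-- Two 3-graphs on `Fin n` are isomorphic. -/
def IsoTo {n : ℕ} (E₁ E₂ : Finset (Finset (Fin n))) : Prop :=
  ∃ σ : Fin n ≃ Fin n, ∀ e : Finset (Fin n), e ∈ E₁ ↔ e.map σ.toEmbedding ∈ E₂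

/-- Two vertices are adjacent if some edge contains both. -/
def Adjacent {n : ℕ} (E : Finset (Finset (Fin n))) (u v : Fin n) : Prop :=
  u ≠ v ∧ ∃ e ∈ E, u ∈ e ∧ v ∈ e

/-- The link of a vertex `v`: all 2-element sets `S` with `S ∪ {v} ∈ E`. -/
def link {n : ℕ} (E : Finset (Finset (Fin n))) (v : Fin n) : Finset (Finset (Fin n)) :=
  (E.filter fun e => v ∈ e).image fun e => e.erase v

/-- The degree of a vertex: the size of its link. -/
def degree {n : ℕ} (E : Finset (Finset (Fin n))) (v : Fin n) : ℕ := (link E v).card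

/-- The transfer `T_v^u(G)`: delete all edges containing `v` and replace `v` for `u`
in all edges containing `u` but not `v`. -/
def transfer {n : ℕ} (E : Finset (Finset (Fin n))) (u v : Fin n) : Finset (Finset (Fin n)) :=
  (E.filter fun e => v ∉ e) ∪
    ((E.filter fun e => u ∈ e ∧ v ∉ e).image fun e => insert v (e.erase u))

/-- A 3-graph is complete 3-partite: there is a partition of the vertices into three classes
such that the edges are exactly the triples with one vertex in each class. -/
def IsComplete3Partite {n : ℕ} (E : Finset (Finset (Fin n))) : Prop :=
  ∃ P : Fin n → Fin 3,
    ∀ e : Finset (Fin n), e ∈ E ↔ ∀ k : Fin 3, (e.filter fun i => P i = k).card = 1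

/-- `G` has maximum `p`-spectral radius among all cancellative 3-graphs on `n` vertices. -/
def MaxSpectral {n : ℕ} (p : ℝ) (E : Finset (Finset (Fin n))) : Prop :=
  IsThreeGraph E ∧ Cancellative E ∧
    ∀ E' : Finset (Finset (Fin n)), IsThreeGraph E' → Cancellative E' →
      specRad p E' ≤ specRad p E

/-!
Write `w(y) = ∑_{e ∈ E} ∏_{i ∈ e} y_i` for the Lagrangian polynomial. On the unit sphere of the
`1`-norm, `P_G(x) ≤ 3 w(|x|)` with `|x|` in the standard simplex, and weights `1/3` on one edge
give `w = 1/27`, so it suffices to show `w ≤ 1/27` on the simplex.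

Take a maximizer `y` of `w` on the simplex with smallest support `T`. Moving a little mass from
`v` to `u` changes `w` by `δ (∂_u w - ∂_v w) - δ² ∂_u ∂_v w`, so all `∂_v w` with `v ∈ T` agree;
and if no edge inside `T` contained `u, v ∈ T`, moving all the mass of `v` onto `u` would keep `w`
and shrink `T`. Cancellativity makes that edge unique: edges `{u, v, a}`, `{u, v, b}` and an edge
through `a, b` violate it. So the edges inside `T` form a Steiner triple system on `T`, and double
counting gives `1 - ∑ y_i² = 6 |T| w(y)`. As `∑ y_i² ≥ 1 / |T|`, this gives
`w(y) ≤ (|T| - 1) / (6 |T|²)`, which is at most `1/27` for `|T| ≥ 3`.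
-/

section Lagrangian

variable {α : Type*}

noncomputable def lagrangePoly (E : Finset (Finset α)) (y : α → ℝ) : ℝ :=
  ∑ e ∈ E, ∏ i ∈ e, y i

variable [DecidableEq α]

/-- `∂ lagrangePoly / ∂ y_v`. -/
noncomputable def linkWeight (E : Finset (Finset α)) (y : α → ℝ) (v : α) : ℝ :=
  ∑ e ∈ E with v ∈ e, ∏ i ∈ e.erase v, y i

/-- `∂² lagrangePoly / ∂ y_u ∂ y_v` for `u ≠ v`. -/
noncomputable def codegreeWeight (E : Finset (Finset α)) (y : α → ℝ) (u v : α) : ℝ :=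
  ∑ e ∈ E with u ∈ e ∧ v ∈ e, ∏ i ∈ (e.erase u).erase v, y i

lemma lagrangePoly_ite_mem {E : Finset (Finset α)} {k : ℕ}
    (hk : ∀ e ∈ E, #e = k) {e₀ : Finset α} (he₀ : e₀ ∈ E) (c : ℝ) :
    lagrangePoly E (fun i => if i ∈ e₀ then c else 0) = c ^ k := by
  rw [lagrangePoly, sum_eq_single e₀]
  · rw [prod_congr rfl fun i hi => if_pos hi, prod_const, hk e₀ he₀]
  · intro e he hne
    obtain ⟨i, hie, hi⟩ := not_subset.1 fun hsub =>
      hne (eq_of_subset_of_card_le hsub (by rw [hk e he, hk e₀ he₀]))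
    exact prod_eq_zero hie (if_neg hi)
  · exact fun h => absurd he₀ h

def shiftMass (y : α → ℝ) (u v : α) (δ : ℝ) : α → ℝ :=
  y + δ • (Pi.single u 1 - Pi.single v 1)

section shiftMass

variable {y : α → ℝ} {u v : α} {δ : ℝ}

@[simp] lemma shiftMass_apply_left (huv : u ≠ v) : shiftMass y u v δ u = y u + δ := by
  simp [shiftMass, huv]

@[simp] lemma shiftMass_apply_right (huv : u ≠ v) : shiftMass y u v δ v = y v - δ := by
  simp [shiftMass, huv.symm, sub_eq_add_neg]

lemma shiftMass_apply_of_ne {i : α} (hu : i ≠ u) (hv : i ≠ v) : shiftMass y u v δ i = y i := by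
  simp [shiftMass, hu, hv]

end shiftMass

lemma prod_shiftMass (e : Finset α) (y : α → ℝ) {u v : α} (huv : u ≠ v) (δ : ℝ) :
    ∏ i ∈ e, shiftMass y u v δ i =
      ∏ i ∈ e, y i
        + δ * ((if u ∈ e then ∏ i ∈ e.erase u, y i else 0)
          - (if v ∈ e then ∏ i ∈ e.erase v, y i else 0))
        - δ ^ 2 * (if u ∈ e ∧ v ∈ e then ∏ i ∈ (e.erase u).erase v, y i else 0) := by
  have hrest : ∀ s : Finset α, u ∉ s → v ∉ s → ∏ i ∈ s, shiftMass y u v δ i = ∏ i ∈ s, y i :=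
    fun s hu hv => prod_congr rfl fun i hi =>
      shiftMass_apply_of_ne (ne_of_mem_of_not_mem hi hu) (ne_of_mem_of_not_mem hi hv)
  by_cases hu : u ∈ e <;> by_cases hv : v ∈ e
  · have hv' : v ∈ e.erase u := mem_erase.2 ⟨huv.symm, hv⟩
    rw [← mul_prod_erase e _ hu, ← mul_prod_erase _ _ hv', hrest _ (by simp) (by simp),
      ← mul_prod_erase e _ hu, ← mul_prod_erase _ _ hv', erase_right_comm,
      ← mul_prod_erase (e.erase v) _ (mem_erase.2 ⟨huv, hu⟩), erase_right_comm]
    simp only [shiftMass_apply_left huv, shiftMass_apply_right huv, hu, hv, and_self, if_true]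
    ring
  · rw [← mul_prod_erase e _ hu, hrest _ (by simp) (fun h => hv (mem_of_mem_erase h)),
      ← mul_prod_erase e y hu]
    simp only [shiftMass_apply_left huv, hu, hv, and_false, if_true, if_false]
    ring
  · rw [← mul_prod_erase e _ hv, hrest _ (fun h => hu (mem_of_mem_erase h)) (by simp),
      ← mul_prod_erase e y hv]
    simp only [shiftMass_apply_right huv, hu, hv, false_and, if_true, if_false]
    ring
  · simp [hrest e hu hv, hu, hv]

theorem lagrangePoly_shiftMass (E : Finset (Finset α)) (y : α → ℝ) {u v : α} (huv : u ≠ v)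
    (δ : ℝ) :
    lagrangePoly E (shiftMass y u v δ) =
      lagrangePoly E y + δ * (linkWeight E y u - linkWeight E y v)
        - δ ^ 2 * codegreeWeight E y u v := by
  simp only [lagrangePoly, linkWeight, codegreeWeight, sum_filter, prod_shiftMass _ y huv,
    mul_sub, sum_add_distrib, sum_sub_distrib, mul_sum]

variable [Fintype α]

lemma shiftMass_mem_stdSimplex {y : α → ℝ} (hy : y ∈ stdSimplex ℝ α) {u v : α} (huv : u ≠ v)
    {δ : ℝ} (hδ : 0 ≤ δ) (hδv : δ ≤ y v) : shiftMass y u v δ ∈ stdSimplex ℝ α := by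
  refine ⟨fun i => ?_, ?_⟩
  · by_cases hu : i = u
    · subst hu; rw [shiftMass_apply_left huv]; linarith [hy.1 i]
    by_cases hv : i = v
    · subst hv; rw [shiftMass_apply_right huv]; linarith
    rw [shiftMass_apply_of_ne hu hv]; exact hy.1 i
  · simp [shiftMass, sum_add_distrib, ← mul_sum, hy.2]

section Maximizer

variable {E : Finset (Finset α)} {y : α → ℝ}

theorem linkWeight_le_of_isMaxOn (hy : y ∈ stdSimplex ℝ α)
    (hmax : IsMaxOn (lagrangePoly E) (stdSimplex ℝ α) y) {u v : α} (huv : u ≠ v)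
    (hv : 0 < y v) : linkWeight E y u ≤ linkWeight E y v := by
  by_contra! hlt
  set d := linkWeight E y u - linkWeight E y v
  set J := codegreeWeight E y u v
  have hd : 0 < d := sub_pos.2 hlt
  have hJ : 0 ≤ J := sum_nonneg fun e _ => prod_nonneg fun i _ => hy.1 i
  set δ := min (y v) (d / (J + 1))
  have hδ : 0 < δ := lt_min hv (by positivity)
  have hδJ : δ * J < d := calc
    δ * J ≤ d / (J + 1) * J := by gcongr; exact min_le_right _ _
    _ < d := by rw [div_mul_eq_mul_div, div_lt_iff₀ (by positivity)]; nlinarith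
  have hle : lagrangePoly E (shiftMass y u v δ) ≤ lagrangePoly E y :=
    hmax (shiftMass_mem_stdSimplex hy huv hδ.le (min_le_left _ _))
  rw [lagrangePoly_shiftMass E y huv] at hle
  change _ + δ * d - δ ^ 2 * J ≤ _ at hle
  nlinarith [mul_pos hδ (sub_pos.2 hδJ)]

theorem linkWeight_eq_of_isMaxOn (hy : y ∈ stdSimplex ℝ α)
    (hmax : IsMaxOn (lagrangePoly E) (stdSimplex ℝ α) y) {u v : α} (hu : 0 < y u)
    (hv : 0 < y v) : linkWeight E y u = linkWeight E y v := by
  rcases eq_or_ne u v with rfl | huv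
  · rfl
  exact le_antisymm (linkWeight_le_of_isMaxOn hy hmax huv hv)
    (linkWeight_le_of_isMaxOn hy hmax huv.symm hu)

variable (E y) in
structure IsMinSupportMaximizer : Prop where
  mem : y ∈ stdSimplex ℝ α
  isMaxOn : IsMaxOn (lagrangePoly E) (stdSimplex ℝ α) y
  card_support_le : ∀ z ∈ stdSimplex ℝ α, IsMaxOn (lagrangePoly E) (stdSimplex ℝ α) z →
    #{i | y i ≠ 0} ≤ #{i | z i ≠ 0}

variable (E) in
theorem exists_isMinSupportMaximizer [Nonempty α] : ∃ y, IsMinSupportMaximizer E y := by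
  set M := {z | z ∈ stdSimplex ℝ α ∧ IsMaxOn (lagrangePoly E) (stdSimplex ℝ α) z}
  have hM : M.Nonempty := (isCompact_stdSimplex ℝ α).exists_isMaxOn
    ⟨_, single_mem_stdSimplex ℝ (Classical.arbitrary α)⟩
    (by unfold lagrangePoly; fun_prop : Continuous (lagrangePoly E)).continuousOn
  set supportCard : (α → ℝ) → ℕ := fun z => #{i | z i ≠ 0}
  obtain ⟨hy, hmax⟩ := Function.argminOn_mem supportCard M hM
  exact ⟨_, hy, hmax, fun z hz hzmax => Function.argminOn_le supportCard M ⟨hz, hzmax⟩⟩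

theorem IsMinSupportMaximizer.exists_edge_subset_support (hy : IsMinSupportMaximizer E y)
    {u v : α} (hu : y u ≠ 0) (hv : y v ≠ 0) (huv : u ≠ v) :
    ∃ e ∈ E, (∀ i ∈ e, y i ≠ 0) ∧ u ∈ e ∧ v ∈ e := by
  have hJ : codegreeWeight E y u v ≠ 0 := by
    intro hJ
    set z := shiftMass y u v (y v)
    have hz : z ∈ stdSimplex ℝ α := shiftMass_mem_stdSimplex hy.mem huv (hy.mem.1 v) le_rfl
    have hfz : lagrangePoly E z = lagrangePoly E y := by
      rw [lagrangePoly_shiftMass E y huv, hJ, linkWeight_eq_of_isMaxOn hy.mem hy.isMaxOn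
        ((hy.mem.1 u).lt_of_ne' hu) ((hy.mem.1 v).lt_of_ne' hv)]
      ring
    have hzmax : IsMaxOn (lagrangePoly E) (stdSimplex ℝ α) z := fun w hw => by
      rw [Set.mem_ofPred_eq, hfz]; exact hy.isMaxOn hw
    have hsub : ({i | z i ≠ 0} : Finset α) ⊆ ({i | y i ≠ 0} : Finset α).erase v := by
      intro i hi
      simp only [mem_filter, mem_univ, true_and, mem_erase] at hi ⊢
      by_cases hiu : i = u
      · subst hiu; exact ⟨huv, hu⟩
      by_cases hiv : i = v
      · subst hiv; simp [z, shiftMass_apply_right huv] at hi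
      exact ⟨hiv, by rwa [show z i = y i from shiftMass_apply_of_ne hiu hiv] at hi⟩
    have := (card_le_card hsub).trans_lt (card_erase_lt_of_mem (by simpa using hv))
    exact this.not_ge (hy.card_support_le z hz hzmax)
  obtain ⟨e, he, hprod⟩ := exists_ne_zero_of_sum_ne_zero hJ
  rw [mem_filter] at he
  refine ⟨e, he.1, fun i hi => ?_, he.2⟩
  by_cases hiu : i = u
  · exact hiu ▸ hu
  by_cases hiv : i = v
  · exact hiv ▸ hv
  exact prod_ne_zero_iff.1 hprod i (mem_erase.2 ⟨hiv, mem_erase.2 ⟨hiu, hi⟩⟩)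

end Maximizer

end Lagrangian

section TripleSystem

variable {α : Type*} [DecidableEq α] {E : Finset (Finset α)} {T : Finset α} {y : α → ℝ}

lemma lagrangePoly_filter_subset (hT : ∀ i ∉ T, y i = 0) :
    lagrangePoly {e ∈ E | e ⊆ T} y = lagrangePoly E y := by
  refine sum_filter_of_ne fun e _ he i hi => ?_
  by_contra hiT
  exact he (prod_eq_zero hi (hT i hiT))

lemma linkWeight_filter_subset (hT : ∀ i ∉ T, y i = 0) {v : α} (hv : v ∈ T) :
    linkWeight {e ∈ E | e ⊆ T} y v = linkWeight E y v := by
  rw [linkWeight, filter_comm]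
  refine sum_filter_of_ne fun e _ he i hi => ?_
  by_contra hiT
  exact he (prod_eq_zero (mem_erase.2 ⟨ne_of_mem_of_not_mem hv hiT |>.symm, hi⟩) (hT i hiT))

lemma sum_sum_filter_mem (hET : ∀ e ∈ E, e ⊆ T) (g : Finset α → α → ℝ) :
    ∑ v ∈ T, ∑ e ∈ E with v ∈ e, g e v = ∑ e ∈ E, ∑ v ∈ e, g e v :=
  sum_comm' fun v e => by
    simp only [mem_filter]
    exact ⟨fun h => ⟨h.2.2, h.2.1⟩, fun h => ⟨hET e h.2 h.1, h.2, h.1⟩⟩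

theorem sum_mul_linkWeight (hET : ∀ e ∈ E, e ⊆ T) {k : ℕ} (hk : ∀ e ∈ E, #e = k) :
    ∑ v ∈ T, y v * linkWeight E y v = k * lagrangePoly E y := by
  simp only [linkWeight, mul_sum, sum_sum_filter_mem hET, lagrangePoly]
  refine sum_congr rfl fun e he => ?_
  rw [sum_congr rfl fun v hv => mul_prod_erase e y hv, sum_const, hk e he, nsmul_eq_mul]

lemma sum_mul_sum_erase_of_card_eq_three {e : Finset α} (he : #e = 3) :
    ∑ v ∈ e, y v * ∑ u ∈ e.erase v, y u = 2 * ∑ v ∈ e, ∏ u ∈ e.erase v, y u := by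
  obtain ⟨a, b, c, hab, hac, hbc, rfl⟩ := card_eq_three.1 he
  simp only [sum_insert, prod_insert, sum_singleton, prod_singleton, mem_insert, mem_singleton,
    erase_insert_eq_erase, erase_insert_of_ne, erase_eq_of_notMem, erase_singleton, hab, hac, hbc,
    or_self, not_false_eq_true, ne_eq, insert_empty_eq]
  ring

lemma sum_filter_mem_sum_erase (hET : ∀ e ∈ E, e ⊆ T)
    (hpair : ∀ u ∈ T, ∀ v ∈ T, u ≠ v → ∃! e, e ∈ E ∧ u ∈ e ∧ v ∈ e) {v : α} (hv : v ∈ T) :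
    ∑ e ∈ E with v ∈ e, ∑ u ∈ e.erase v, y u = ∑ u ∈ T.erase v, y u := by
  rw [← sum_biUnion]
  · congr 1
    ext u
    simp only [mem_biUnion, mem_filter, mem_erase]
    constructor
    · rintro ⟨e, ⟨he, -⟩, huv, hu⟩
      exact ⟨huv, hET e he hu⟩
    · rintro ⟨huv, hu⟩
      obtain ⟨e, ⟨he, hve, hue⟩, -⟩ := hpair v hv u hu (Ne.symm huv)
      exact ⟨e, ⟨he, hve⟩, huv, hue⟩
  · intro e he e' he' hne
    refine disjoint_left.2 fun u hu hu' => hne ?_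
    simp only [coe_filter, Set.mem_ofPred_eq, mem_erase] at he he' hu hu'
    exact (hpair v hv u (hET e he.1 hu.2) (Ne.symm hu.1)).unique ⟨he.1, he.2, hu.2⟩
      ⟨he'.1, he'.2, hu'.2⟩

theorem one_sub_sum_sq_eq_mul_lagrangePoly (hE : ∀ e ∈ E, #e = 3) (hET : ∀ e ∈ E, e ⊆ T)
    (hpair : ∀ u ∈ T, ∀ v ∈ T, u ≠ v → ∃! e, e ∈ E ∧ u ∈ e ∧ v ∈ e)
    (hsum : ∑ i ∈ T, y i = 1) (hlink : ∀ u ∈ T, ∀ v ∈ T, linkWeight E y u = linkWeight E y v) :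
    1 - ∑ i ∈ T, y i ^ 2 = 6 * #T * lagrangePoly E y := by
  have hlink3 : ∀ v ∈ T, linkWeight E y v = 3 * lagrangePoly E y := fun v hv => by
    rw [← Nat.cast_ofNat, ← sum_mul_linkWeight hET hE, ← one_mul (linkWeight E y v), ← hsum,
      sum_mul]
    exact sum_congr rfl fun u hu => by rw [hlink u hu v hv]
  calc 1 - ∑ i ∈ T, y i ^ 2 = ∑ v ∈ T, y v * (1 - y v) := by
        simp only [mul_sub, mul_one, sum_sub_distrib, hsum, sq]
    _ = ∑ v ∈ T, ∑ e ∈ E with v ∈ e, y v * ∑ u ∈ e.erase v, y u := sum_congr rfl fun v hv => by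
        rw [← mul_sum, sum_filter_mem_sum_erase hET hpair hv, sum_erase_eq_sub hv, hsum]
    _ = ∑ e ∈ E, 2 * ∑ v ∈ e, ∏ u ∈ e.erase v, y u := by
        rw [sum_sum_filter_mem hET]
        exact sum_congr rfl fun e he => sum_mul_sum_erase_of_card_eq_three (hE e he)
    _ = 2 * ∑ v ∈ T, linkWeight E y v := by
        rw [← mul_sum, ← sum_sum_filter_mem hET]; rfl
    _ = 6 * #T * lagrangePoly E y := by
        rw [sum_congr rfl hlink3, sum_const, nsmul_eq_mul]; ring

end TripleSystem

section Cancellative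

variable {n : ℕ} {E : Finset (Finset (Fin n))}

theorem Cancellative.eq_of_two_le_card_inter (hC : Cancellative E) (hE : IsThreeGraph E)
    {e e' : Finset (Fin n)} (he : e ∈ E) (he' : e' ∈ E) (hinter : 2 ≤ #(e ∩ e'))
    (hcover : ∀ a ∈ e, ∀ b ∈ e', a ≠ b → ∃ A ∈ E, a ∈ A ∧ b ∈ A) : e = e' := by
  by_contra hne
  have hsdiff : ∀ {f f'}, f ∈ E → f' ∈ E → f ≠ f' → 2 ≤ #(f' ∩ f) → ∃ w, f \ f' = {w} := by
    intro f f' hf hf' hff' h2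
    rw [← card_eq_one]
    have hle : #(f \ f') ≤ 1 := by rw [card_sdiff, hE f hf]; omega
    have hpos : (f \ f').Nonempty := by
      rw [nonempty_iff_ne_empty, Ne, sdiff_eq_empty_iff_subset]
      exact fun hsub => hff' (eq_of_subset_of_card_le hsub (by rw [hE f hf, hE f' hf']))
    have := hpos.card_pos
    omega
  obtain ⟨w, hw⟩ := hsdiff he he' hne (by rwa [inter_comm])
  obtain ⟨w', hw'⟩ := hsdiff he' he (Ne.symm hne) hinter
  have hwe : w ∈ e \ e' := hw ▸ mem_singleton_self w
  have hw'e' : w' ∈ e' \ e := hw' ▸ mem_singleton_self w'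
  rw [mem_sdiff] at hwe hw'e'
  obtain ⟨A, hA, hwA, hw'A⟩ := hcover w hwe.1 w' hw'e'.1 (ne_of_mem_of_not_mem hw'e'.1 hwe.2).symm
  refine hC A hA e he e' he' (ne_of_mem_of_not_mem' hw'A hw'e'.2)
    (ne_of_mem_of_not_mem' hwA hwe.2) hne ?_
  rw [symmDiff_def, sup_eq_union, hw, hw']
  exact union_subset (singleton_subset_iff.2 hwA) (singleton_subset_iff.2 hw'A)

variable {y : Fin n → ℝ}

theorem IsMinSupportMaximizer.existsUnique_edge (hy : IsMinSupportMaximizer E y)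
    (hE : IsThreeGraph E) (hC : Cancellative E) {u v : Fin n} (hu : y u ≠ 0) (hv : y v ≠ 0)
    (huv : u ≠ v) :
    ∃! e, e ∈ {e ∈ E | e ⊆ ({i | y i ≠ 0} : Finset (Fin n))} ∧ u ∈ e ∧ v ∈ e := by
  have hsupp : ∀ {e : Finset (Fin n)}, (∀ i ∈ e, y i ≠ 0) →
      e ⊆ ({i | y i ≠ 0} : Finset (Fin n)) := fun h i hi => by simpa using h i hi
  obtain ⟨e, he, heT, hue, hve⟩ := hy.exists_edge_subset_support hu hv huv
  refine ⟨e, ⟨mem_filter.2 ⟨he, hsupp heT⟩, hue, hve⟩, fun e' ⟨he', hue', hve'⟩ => ?_⟩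
  rw [mem_filter] at he'
  refine (hC.eq_of_two_le_card_inter hE he he'.1 ?_ fun a ha b hb hab => ?_).symm
  · calc 2 = #{u, v} := (card_pair huv).symm
      _ ≤ #(e ∩ e') := card_le_card (by simp [insert_subset_iff, *])
  · obtain ⟨A, hA, -, haA, hbA⟩ :=
      hy.exists_edge_subset_support (heT a ha) (by simpa using he'.2 hb) hab
    exact ⟨A, hA, haA, hbA⟩

theorem lagrangePoly_le_of_cancellative (hE : IsThreeGraph E) (hC : Cancellative E)
    (hx : y ∈ stdSimplex ℝ (Fin n)) : lagrangePoly E y ≤ 1 / 27 := by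
  obtain ⟨i, -⟩ := exists_ne_zero_of_sum_ne_zero (hx.2.symm ▸ one_ne_zero : ∑ i, y i ≠ 0)
  have : Nonempty (Fin n) := ⟨i⟩
  obtain ⟨z, hz⟩ := exists_isMinSupportMaximizer E
  refine (hz.isMaxOn hx).trans ?_
  set T : Finset (Fin n) := {i | z i ≠ 0}
  have hT : ∀ i ∉ T, z i = 0 := by simp [T]
  have hmemT : ∀ i ∈ T, z i ≠ 0 := by simp [T]
  have hsum : ∑ i ∈ T, z i = 1 := by rw [sum_filter_ne_zero]; exact hz.mem.2
  rcases le_or_gt (lagrangePoly E z) 0 with hle | hf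
  · linarith
  obtain ⟨e₀, he₀, hprod⟩ := exists_ne_zero_of_sum_ne_zero hf.ne'
  have hT3 : 3 ≤ #T := hE e₀ he₀ ▸
    card_le_card fun i hi => by simpa [T] using prod_ne_zero_iff.1 hprod i hi
  have key := one_sub_sum_sq_eq_mul_lagrangePoly (fun e he => hE e (mem_filter.1 he).1)
    (fun e he => (mem_filter.1 he).2)
    (fun u hu v hv huv => hz.existsUnique_edge hE hC (hmemT u hu) (hmemT v hv) huv) hsum
    (fun u hu v hv => by
      rw [linkWeight_filter_subset hT hu, linkWeight_filter_subset hT hv]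
      exact linkWeight_eq_of_isMaxOn hz.mem hz.isMaxOn ((hz.mem.1 u).lt_of_ne' (hmemT u hu))
        ((hz.mem.1 v).lt_of_ne' (hmemT v hv)))
  rw [lagrangePoly_filter_subset hT] at key
  have hcs : 1 ≤ (#T : ℝ) * ∑ i ∈ T, z i ^ 2 := by
    simpa [hsum] using sq_sum_le_card_mul_sum_sq (s := T) (f := z)
  -- `27 (t - 1) ≤ 6 t²` is `(2 t - 3) (t - 3) ≥ 0`, for `t = #T`
  have ht : (3 : ℝ) ≤ #T := by exact_mod_cast hT3
  nlinarith [mul_nonneg (by linarith : (0 : ℝ) ≤ 2 * #T - 3) (by linarith : (0 : ℝ) ≤ #T - 3)]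

end Cancellative

lemma pNorm_one {n : ℕ} (x : Fin n → ℝ) : pNorm 1 x = ∑ i, |x i| := by
  simp [pNorm]

lemma polyForm_le_lagrangePoly_abs {n : ℕ} (E : Finset (Finset (Fin n))) (x : Fin n → ℝ) :
    polyForm E x ≤ 3 * lagrangePoly E (fun i => |x i|) := by
  unfold polyForm lagrangePoly
  gcongr 3 * ?_
  exact sum_le_sum fun e _ => (le_abs_self _).trans (abs_prod e x).le

/-- For a cancellative 3-graph with at least one edge, `λ^(1)(G) = 1/9`. -/
theorem specRad_one_eq_ninth {n : ℕ} (E : Finset (Finset (Fin n)))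
    (hE : IsThreeGraph E) (hC : Cancellative E) (hne : E.Nonempty) :
    specRad 1 E = 1 / 9 := by
  obtain ⟨e₀, he₀⟩ := hne
  refine IsGreatest.csSup_eq ⟨⟨fun i => if i ∈ e₀ then 1 / 3 else 0, ?_, ?_⟩, ?_⟩
  · simp [pNorm_one, apply_ite, hE e₀ he₀]
  · rw [polyForm, ← lagrangePoly, lagrangePoly_ite_mem hE he₀]
    norm_num
  · rintro _ ⟨x, hx, rfl⟩
    have habs : (fun i => |x i|) ∈ stdSimplex ℝ (Fin n) :=
      ⟨fun i => abs_nonneg _, by rwa [← pNorm_one]⟩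
    calc polyForm E x ≤ 3 * lagrangePoly E (fun i => |x i|) := polyForm_le_lagrangePoly_abs E x
      _ ≤ 3 * (1 / 27) := by gcongr; exact lagrangePoly_le_of_cancellative hE hC habs
      _ = 1 / 9 := by norm_num
end

section
/- Let G be a cancellative 3-uniform hypergraph. Then for any vertices u, v ∈ V(G), the 3-graph T_v^u(G) is also cancellative. -/
open Finset

/-- Case: `A = insert v (a.erase u)`, `B = insert v (b.erase u)`, `C = c ∈ E` with `v ∉ c`. -/
private lemma transfer_case6 {n : ℕ} {E : Finset (Finset (Fin n))}
    (hE : IsThreeGraph E) (hC : Cancellative E) {u v : Fin n}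
    {a b c : Finset (Fin n)} (ha : a ∈ E) (hb : b ∈ E) (hc : c ∈ E)
    (hua : u ∈ a) (hva : v ∉ a) (hub : u ∈ b) (hvb : v ∉ b) (hvc : v ∉ c)
    (hAB : insert v (a.erase u) ≠ insert v (b.erase u))
    (hsub : symmDiff (insert v (b.erase u)) c ⊆ insert v (a.erase u)) : False := by
  set a' := a.erase u with ha'
  set b' := b.erase u with hb'
  have hva' : v ∉ a' := fun h => hva (mem_of_mem_erase h)
  have hvb' : v ∉ b' := fun h => hvb (mem_of_mem_erase h)
  have hub' : u ∉ b' := notMem_erase u b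
  have hua' : u ∉ a' := notMem_erase u a
  have huv : u ≠ v := fun h => hvb (h ▸ hub)
  -- first: u ∉ c
  have huc : u ∉ c := by
    intro huc
    have hu1 : u ∈ symmDiff (insert v b') c := by
      rw [mem_symmDiff]
      exact Or.inr ⟨huc, fun h => (mem_insert.1 h).elim huv hub'⟩
    have := hsub hu1
    rcases mem_insert.1 this with h | h
    · exact huv h
    · exact hua' h
  -- symmDiff b' c ⊆ a'
  have hsub' : symmDiff b' c ⊆ a' := by
    intro z hz
    have hzv : z ≠ v := by
      rcases mem_symmDiff.1 hz with ⟨h1, _⟩ | ⟨h1, _⟩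
      · exact fun e => hvb' (e ▸ h1)
      · exact fun e => hvc (e ▸ h1)
    have hzA : z ∈ symmDiff (insert v b') c := by
      rw [mem_symmDiff]
      rcases mem_symmDiff.1 hz with ⟨h1, h2⟩ | ⟨h1, h2⟩
      · exact Or.inl ⟨mem_insert_of_mem h1, h2⟩
      · exact Or.inr ⟨h1, fun h => (mem_insert.1 h).elim hzv h2⟩
    rcases mem_insert.1 (hsub hzA) with h | h
    · exact absurd h hzv
    · exact h
  -- cardinality argument: b' ⊆ c and c \ b' = {x}
  have ha2 : a'.card = 2 := by rw [ha', card_erase_of_mem hua, hE a ha]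
  have hb2 : b'.card = 2 := by rw [hb', card_erase_of_mem hub, hE b hb]
  have hc3 : c.card = 3 := hE c hc
  have hd : Disjoint (b' \ c) (c \ b') := disjoint_sdiff_sdiff
  have hcard : (b' \ c).card + (c \ b').card ≤ 2 := by
    rw [← card_union_of_disjoint hd]
    calc ((b' \ c) ∪ (c \ b')).card = (symmDiff b' c).card := by
          rw [symmDiff_def]; rfl
      _ ≤ a'.card := card_le_card hsub'
      _ = 2 := ha2
  have h1 : (b' \ c).card + (b' ∩ c).card = 2 := by
    rw [card_sdiff_add_card_inter, hb2]
  have h2 : (c \ b').card + (c ∩ b').card = 3 := by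
    rw [card_sdiff_add_card_inter, hc3]
  have hinter : (b' ∩ c).card = (c ∩ b').card := by rw [inter_comm]
  have hbc0 : (b' \ c).card = 0 := by omega
  have hbsub : b' ⊆ c := sdiff_eq_empty_iff_subset.1 (card_eq_zero.1 hbc0)
  have hx1 : (c \ b').card = 1 := by omega
  obtain ⟨x, hxe⟩ := card_eq_one.1 hx1
  have hxc : x ∈ c \ b' := hxe ▸ mem_singleton_self x
  have hxa' : x ∈ a' :=
    hsub' (mem_symmDiff.2 (Or.inr ⟨(mem_sdiff.1 hxc).1, (mem_sdiff.1 hxc).2⟩))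
  -- conclude using cancellativity of E on a, b, c
  have hab : a ≠ b := by
    intro h; exact hAB (by rw [ha', hb', h])
  have hbc : b ≠ c := fun h => huc (h ▸ hub)
  have hac : a ≠ c := fun h => huc (h ▸ hua)
  refine hC a ha b hb c hc hab hac hbc ?_
  intro z hz
  rcases mem_symmDiff.1 hz with ⟨h1, h2⟩ | ⟨h1, h2⟩
  · by_cases hzu : z = u
    · exact hzu ▸ hua
    · exact absurd (hbsub (mem_erase.2 ⟨hzu, h1⟩)) h2
  · have hzx : z ∈ c \ b' := mem_sdiff.2 ⟨h1, fun hz' => h2 (mem_of_mem_erase hz')⟩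
    rw [hxe, mem_singleton] at hzx
    exact erase_subset u a (hzx ▸ hxa')

/-- If `G` is cancellative then so is `T_v^u(G)`, for any vertices `u, v`. -/
theorem transfer_cancellative {n : ℕ} (E : Finset (Finset (Fin n)))
    (hE : IsThreeGraph E) (hC : Cancellative E) (u v : Fin n) :
    Cancellative (transfer E u v) := by
  intro A hA B hB C hCm hAB hAC hBC hsub
  simp only [transfer, mem_union, mem_filter, mem_image] at hA hB hCm
  rcases hA with ⟨hAE, hvA⟩ | ⟨a, ⟨haE, hua, hva⟩, rfl⟩ <;>
    rcases hB with ⟨hBE, hvB⟩ | ⟨b, ⟨hbE, hub, hvb⟩, rfl⟩ <;>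
      rcases hCm with ⟨hCE, hvC⟩ | ⟨c, ⟨hcE, huc, hvc⟩, rfl⟩
  · -- A0 B0 C0
    exact hC A hAE B hBE C hCE hAB hAC hBC hsub
  · -- A0 B0 C1 : v ∈ C \ B gives v ∈ A, contradiction
    have : v ∈ symmDiff B (insert v (c.erase u)) :=
      mem_symmDiff.2 (Or.inr ⟨mem_insert_self v _, hvB⟩)
    exact hvA (hsub this)
  · -- A0 B1 C0
    have : v ∈ symmDiff (insert v (b.erase u)) C :=
      mem_symmDiff.2 (Or.inl ⟨mem_insert_self v _, hvC⟩)
    exact hvA (hsub this)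
  · -- A0 B1 C1
    have hbc : b ≠ c := fun h => hBC (by rw [h])
    have hsub2 : symmDiff b c ⊆ A := by
      intro z hz
      rcases mem_symmDiff.1 hz with ⟨h1, h2⟩ | ⟨h1, h2⟩
      · have hzu : z ≠ u := fun e => h2 (e ▸ huc)
        have hzv : z ≠ v := fun e => hvb (e ▸ h1)
        refine hsub (mem_symmDiff.2 (Or.inl ⟨mem_insert_of_mem (mem_erase.2 ⟨hzu, h1⟩), ?_⟩))
        intro hzC
        exact h2 (mem_of_mem_erase (mem_of_mem_insert_of_ne hzC hzv))
      · have hzu : z ≠ u := fun e => h2 (e ▸ hub)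
        have hzv : z ≠ v := fun e => hvc (e ▸ h1)
        refine hsub (mem_symmDiff.2 (Or.inr ⟨mem_insert_of_mem (mem_erase.2 ⟨hzu, h1⟩), ?_⟩))
        intro hzB
        exact h2 (mem_of_mem_erase (mem_of_mem_insert_of_ne hzB hzv))
    have hAb : A ≠ b := by
      intro h; subst h
      have hcb : c ⊆ A := by
        intro z hz
        by_cases hzb : z ∈ A
        · exact hzb
        · exact hsub2 (mem_symmDiff.2 (Or.inr ⟨hz, hzb⟩))
      exact hbc (eq_of_subset_of_card_le hcb (by rw [hE A hAE, hE c hcE])).symm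
    have hAc : A ≠ c := by
      intro h; subst h
      have hbcs : b ⊆ A := by
        intro z hz
        by_cases hzc : z ∈ A
        · exact hzc
        · exact hsub2 (mem_symmDiff.2 (Or.inl ⟨hz, hzc⟩))
      exact hbc (eq_of_subset_of_card_le hbcs (by rw [hE A hAE, hE b hbE]))
    exact hC A hAE b hbE c hcE hAb hAc hbc hsub2
  · -- A1 B0 C0
    have hsub2 : symmDiff B C ⊆ a := by
      intro z hz
      have hzv : z ≠ v := by
        rcases mem_symmDiff.1 hz with ⟨h1, _⟩ | ⟨h1, _⟩
        · exact fun e => hvB (e ▸ h1)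
        · exact fun e => hvC (e ▸ h1)
      exact erase_subset u a (mem_of_mem_insert_of_ne (hsub hz) hzv)
    have haB : a ≠ B := by
      intro h; subst h
      have : C ⊆ a := by
        intro z hz
        by_cases hzb : z ∈ a
        · exact hzb
        · exact hsub2 (mem_symmDiff.2 (Or.inr ⟨hz, hzb⟩))
      exact hBC (eq_of_subset_of_card_le this (by rw [hE a haE, hE C hCE])).symm
    have haC : a ≠ C := by
      intro h; subst h
      have : B ⊆ a := by
        intro z hz
        by_cases hzc : z ∈ a
        · exact hzc
        · exact hsub2 (mem_symmDiff.2 (Or.inl ⟨hz, hzc⟩))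
      exact hBC (eq_of_subset_of_card_le this (by rw [hE a haE, hE B hBE]))
    exact hC a haE B hBE C hCE haB haC hBC hsub2
  · -- A1 B0 C1
    rw [symmDiff_comm] at hsub
    exact absurd hsub
      (fun h => transfer_case6 hE hC haE hcE hBE hua hva huc hvc hvB hAC h)
  · -- A1 B1 C0
    exact absurd hsub
      (fun h => transfer_case6 hE hC haE hbE hCE hua hva hub hvb hvC hAB h)
  · -- A1 B1 C1
    have hab : a ≠ b := fun h => hAB (by rw [h])
    have hac : a ≠ c := fun h => hAC (by rw [h])
    have hbc : b ≠ c := fun h => hBC (by rw [h])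
    refine hC a haE b hbE c hcE hab hac hbc ?_
    intro z hz
    rcases mem_symmDiff.1 hz with ⟨h1, h2⟩ | ⟨h1, h2⟩
    · have hzu : z ≠ u := fun e => h2 (e ▸ huc)
      have hzv : z ≠ v := fun e => hvb (e ▸ h1)
      have : z ∈ symmDiff (insert v (b.erase u)) (insert v (c.erase u)) := by
        refine mem_symmDiff.2 (Or.inl ⟨mem_insert_of_mem (mem_erase.2 ⟨hzu, h1⟩), ?_⟩)
        intro hzC
        exact h2 (mem_of_mem_erase (mem_of_mem_insert_of_ne hzC hzv))
      exact erase_subset u a (mem_of_mem_insert_of_ne (hsub this) hzv)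
    · have hzu : z ≠ u := fun e => h2 (e ▸ hub)
      have hzv : z ≠ v := fun e => hvc (e ▸ h1)
      have : z ∈ symmDiff (insert v (b.erase u)) (insert v (c.erase u)) := by
        refine mem_symmDiff.2 (Or.inr ⟨mem_insert_of_mem (mem_erase.2 ⟨hzu, h1⟩), ?_⟩)
        intro hzB
        exact h2 (mem_of_mem_erase (mem_of_mem_insert_of_ne hzB hzv))
      exact erase_subset u a (mem_of_mem_insert_of_ne (hsub this) hzv)
end

section
/- Let p > 1 be a real number and let G be a complete 3-partite 3-uniform hypergraph with three nonempty vertex classes. Then λ^(p)(G) = (27 · |E(G)|)^{1 - 1/p} / 9. -/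
open Finset

/-!
Split the vertices into the classes `A₀, A₁, A₂` of sizes `a₀, a₁, a₂`, so that `|E| = a₀ a₁ a₂`.
The polynomial form factors as `3 S₀ S₁ S₂` with `Sₖ` the sum of `x` over `Aₖ`. Hölder gives
`|Sₖ|^p ≤ aₖ^(p-1) tₖ`, where `tₖ` is the `p`-mass of `x` on `Aₖ`, and AM-GM gives
`t₀ t₁ t₂ ≤ 1/27` on the unit sphere; together `(|S₀ S₁ S₂|)^p ≤ |E|^(p-1) / 27`. Equality holds
for the vector equal to `(3 aₖ)^(-1/p)` on `Aₖ`.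
-/

lemma sum_filter_comp_eq_card_nsmul {α ι M : Type*} [Fintype α] [DecidableEq ι] {P : α → ι}
    [AddCommMonoid M] (g : ι → M) (k : ι) :
    ∑ i with P i = k, g (P i) = #{i | P i = k} • g k := by
  rw [sum_congr rfl fun i hi => by rw [(mem_filter.1 hi).2], sum_const]

section CompletePartite

variable {α ι : Type*} [DecidableEq α] [Fintype ι] [DecidableEq ι] {P : α → ι}

lemma filter_image_univ_eq_singleton {v : ι → α} (hv : ∀ k, P (v k) = k) (k : ι) :
    (univ.image v).filter (fun i => P i = k) = {v k} := by
  ext i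
  simp only [mem_filter, mem_image, mem_univ, true_and, mem_singleton]
  constructor
  · rintro ⟨⟨l, rfl⟩, rfl⟩
    rw [hv]
  · rintro rfl
    exact ⟨⟨k, rfl⟩, hv k⟩

lemma exists_image_univ_eq_of_card_filter_eq_one {e : Finset α}
    (he : ∀ k, (e.filter fun i => P i = k).card = 1) :
    ∃ v : ι → α, (∀ k, P (v k) = k) ∧ univ.image v = e := by
  choose v hv using fun k => card_eq_one.1 (he k)
  have hmem (k : ι) : v k ∈ e ∧ P (v k) = k :=
    mem_filter.1 (by rw [hv k]; exact mem_singleton_self _)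
  refine ⟨v, fun k => (hmem k).2, ?_⟩
  ext i
  simp only [mem_image, mem_univ, true_and]
  constructor
  · rintro ⟨k, rfl⟩
    exact (hmem k).1
  · intro hi
    have : i ∈ e.filter (fun j => P j = P i) := mem_filter.2 ⟨hi, rfl⟩
    rw [hv, mem_singleton] at this
    exact ⟨P i, this.symm⟩

theorem sum_prod_eq_prod_sum_filter [Fintype α] {R : Type*} [CommSemiring R]
    {E : Finset (Finset α)} (hpart : ∀ e, e ∈ E ↔ ∀ k, (e.filter fun i => P i = k).card = 1)
    (f : α → R) :
    ∑ e ∈ E, ∏ i ∈ e, f i = ∏ k, ∑ i with P i = k, f i := by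
  have mem_piFinset_iff (v : ι → α) :
      v ∈ Fintype.piFinset (fun k => {i | P i = k}) ↔ ∀ k, P (v k) = k := by
    simp [Fintype.mem_piFinset]
  rw [prod_univ_sum]
  symm
  -- the edges are the images of the transversals `v` of the classes
  refine sum_bij (fun v _ => univ.image v) ?_ ?_ ?_ ?_
  · intro v hv
    rw [mem_piFinset_iff] at hv
    rw [hpart]
    intro k
    rw [filter_image_univ_eq_singleton hv, card_singleton]
  · intro v hv w hw hvw
    rw [mem_piFinset_iff] at hv hw
    funext k
    have := filter_image_univ_eq_singleton hv k
    rwa [hvw, filter_image_univ_eq_singleton hw, singleton_inj, eq_comm] at this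
  · intro e he
    obtain ⟨v, hv, rfl⟩ := exists_image_univ_eq_of_card_filter_eq_one ((hpart e).1 he)
    exact ⟨v, (mem_piFinset_iff v).2 hv, rfl⟩
  · intro v hv
    rw [mem_piFinset_iff] at hv
    rw [prod_image (Function.LeftInverse.injective hv).injOn]

theorem card_eq_prod_card_filter [Fintype α] {E : Finset (Finset α)}
    (hpart : ∀ e, e ∈ E ↔ ∀ k, (e.filter fun i => P i = k).card = 1) :
    #E = ∏ k, #{i | P i = k} := by
  simpa using sum_prod_eq_prod_sum_filter hpart (fun _ => (1 : ℕ))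

end CompletePartite

lemma abs_sum_rpow_le {ι : Type*} (s : Finset ι) (x : ι → ℝ) {p : ℝ} (hp : 1 ≤ p) :
    |∑ i ∈ s, x i| ^ p ≤ (#s : ℝ) ^ (p - 1) * ∑ i ∈ s, |x i| ^ p :=
  (Real.rpow_le_rpow (abs_nonneg _) (abs_sum_le_sum_abs _ _) (by linarith)).trans
    (Real.rpow_sum_le_const_mul_sum_rpow s x hp)

lemma prod_le_sum_div_card_pow {ι : Type*} (s : Finset ι) (z : ι → ℝ) (hz : ∀ i ∈ s, 0 ≤ z i) :
    ∏ i ∈ s, z i ≤ ((∑ i ∈ s, z i) / #s) ^ #s := by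
  rcases s.eq_empty_or_nonempty with rfl | hs
  · simp
  have amgm := Real.geom_mean_le_arith_mean s (fun _ => 1) z (fun _ _ => zero_le_one)
    (by simpa using hs) hz
  simp only [Real.rpow_one, sum_const, nsmul_eq_mul, mul_one, one_mul] at amgm
  calc ∏ i ∈ s, z i = ((∏ i ∈ s, z i) ^ ((#s : ℝ)⁻¹)) ^ #s :=
        (Real.rpow_inv_natCast_pow (prod_nonneg hz) (card_ne_zero.2 hs)).symm
    _ ≤ _ := pow_le_pow_left₀ (Real.rpow_nonneg (prod_nonneg hz) _) amgm _

lemma pNorm_eq_one_iff {n : ℕ} {p : ℝ} (hp : 0 < p) (x : Fin n → ℝ) :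
    pNorm p x = 1 ↔ ∑ i, |x i| ^ p = 1 := by
  have h := Real.rpow_left_inj
    (sum_nonneg (s := univ) fun i _ => Real.rpow_nonneg (abs_nonneg (x i)) p) zero_le_one
    (one_div_ne_zero hp.ne')
  rwa [Real.one_rpow] at h

section Complete3Partite

variable {n : ℕ} {p : ℝ} {E : Finset (Finset (Fin n))} {P : Fin n → Fin 3}

lemma rpow_one_sub_inv_div_rpow {m : ℝ} (hm : 0 ≤ m) (hp : p ≠ 0) :
    ((27 * m) ^ (1 - 1 / p) / 27) ^ p = m ^ (p - 1) / 27 := by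
  have hexp : (1 - 1 / p) * p = p - 1 := by field_simp
  rw [Real.div_rpow (by positivity) (by norm_num), ← Real.rpow_mul (by positivity), hexp,
    Real.mul_rpow (by norm_num) hm, Real.rpow_sub_one (by norm_num)]
  field_simp

theorem polyForm_le_of_pNorm_eq_one (hp : 1 < p)
    (hpart : ∀ e, e ∈ E ↔ ∀ k, (e.filter fun i => P i = k).card = 1)
    {x : Fin n → ℝ} (hx : pNorm p x = 1) :
    polyForm E x ≤ (27 * (#E : ℝ)) ^ (1 - 1 / p) / 9 := by
  set S : Fin 3 → ℝ := fun k => ∑ i with P i = k, x i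
  set t : Fin 3 → ℝ := fun k => ∑ i with P i = k, |x i| ^ p
  have ht (k : Fin 3) : 0 ≤ t k := sum_nonneg fun i _ => Real.rpow_nonneg (abs_nonneg _) _
  have hsum_t : ∑ k, t k = 1 := by
    rw [sum_fiberwise, ← pNorm_eq_one_iff (by linarith)]
    exact hx
  have hprod_t : ∏ k, t k ≤ 1 / 27 := by
    refine (prod_le_sum_div_card_pow univ t fun k _ => ht k).trans_eq ?_
    rw [hsum_t]
    norm_num
  have hprod_S : (∏ k, |S k|) ^ p ≤ (#E : ℝ) ^ (p - 1) / 27 := calc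
    (∏ k, |S k|) ^ p = ∏ k, |S k| ^ p :=
      (Real.finsetProd_rpow _ _ (fun k _ => abs_nonneg _) _).symm
    _ ≤ ∏ k, ((#{i | P i = k} : ℝ) ^ (p - 1) * t k) :=
      prod_le_prod (fun k _ => by positivity) fun k _ => abs_sum_rpow_le _ x hp.le
    _ = (#E : ℝ) ^ (p - 1) * ∏ k, t k := by
      rw [prod_mul_distrib, Real.finsetProd_rpow _ _ (fun k _ => by positivity),
        card_eq_prod_card_filter hpart, Nat.cast_prod]
    _ ≤ (#E : ℝ) ^ (p - 1) / 27 := by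
      rw [div_eq_mul_one_div]
      gcongr
  have habs_S : ∏ k, |S k| ≤ (27 * (#E : ℝ)) ^ (1 - 1 / p) / 27 := by
    rw [← Real.rpow_le_rpow_iff (by positivity) (by positivity) (by linarith : 0 < p),
      rpow_one_sub_inv_div_rpow (by positivity) (by linarith)]
    exact hprod_S
  calc polyForm E x = 3 * ∏ k, S k := by rw [polyForm, sum_prod_eq_prod_sum_filter hpart]
    _ ≤ 3 * ∏ k, |S k| := by
      rw [← abs_prod]
      gcongr
      exact le_abs_self _
    _ ≤ (27 * (#E : ℝ)) ^ (1 - 1 / p) / 9 := by linarith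

theorem exists_pNorm_eq_one_polyForm_eq (hp : 0 < p)
    (hpart : ∀ e, e ∈ E ↔ ∀ k, (e.filter fun i => P i = k).card = 1)
    (hsurj : ∀ k : Fin 3, ∃ i, P i = k) :
    ∃ x, pNorm p x = 1 ∧ polyForm E x = (27 * (#E : ℝ)) ^ (1 - 1 / p) / 9 := by
  set a : Fin 3 → ℝ := fun k => #{i | P i = k}
  have ha (k : Fin 3) : 0 < a k := by
    obtain ⟨i, hi⟩ := hsurj k
    exact Nat.cast_pos.2 (card_pos.2 ⟨i, mem_filter.2 ⟨mem_univ _, hi⟩⟩)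
  have hE : (#E : ℝ) = ∏ k, a k := by rw [card_eq_prod_card_filter hpart, Nat.cast_prod]
  have hE_pos : 0 < 27 * (#E : ℝ) := by
    rw [hE]
    exact mul_pos (by norm_num) (prod_pos fun k _ => ha k)
  refine ⟨fun i => (3 * a (P i)) ^ (-(1 / p)), ?_, ?_⟩
  · have hpow (k : Fin 3) : |(3 * a k) ^ (-(1 / p))| ^ p = (3 * a k)⁻¹ := by
      have hexp : -(1 / p) * p = -1 := by field_simp
      rw [abs_of_pos (by have := ha k; positivity), ← Real.rpow_mul (by have := ha k; positivity),
        hexp, Real.rpow_neg_one]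
    have hclass (k : Fin 3) : ∑ i with P i = k, |(3 * a (P i)) ^ (-(1 / p))| ^ p = 1 / 3 := by
      rw [sum_filter_comp_eq_card_nsmul (fun k => |(3 * a k) ^ (-(1 / p))| ^ p), nsmul_eq_mul,
        hpow]
      change a k * (3 * a k)⁻¹ = 1 / 3
      field_simp [(ha k).ne']
    rw [pNorm_eq_one_iff hp, ← sum_fiberwise univ P]
    simp only [hclass, sum_const, card_univ, Fintype.card_fin]
    norm_num
  · rw [polyForm, sum_prod_eq_prod_sum_filter hpart]
    simp only [sum_filter_comp_eq_card_nsmul (fun k => (3 * a k) ^ (-(1 / p))), nsmul_eq_mul]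
    change 3 * ∏ k, a k * (3 * a k) ^ (-(1 / p)) = _
    rw [prod_mul_distrib, Real.finsetProd_rpow _ _ (fun k _ => by have := ha k; positivity),
      prod_mul_distrib, prod_const, card_univ, Fintype.card_fin, ← hE, sub_eq_add_neg,
      Real.rpow_add hE_pos, Real.rpow_one]
    norm_num
    ring

end Complete3Partite

/-- For `p > 1`, a complete 3-partite 3-graph `G` with three nonempty vertex classes
satisfies `λ^(p)(G) = (27 |E(G)|)^(1 - 1/p) / 9`. -/
theorem specRad_complete3Partite {n : ℕ} (p : ℝ) (hp : 1 < p)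
    (E : Finset (Finset (Fin n))) (P : Fin n → Fin 3) (hsurj : ∀ k : Fin 3, ∃ i, P i = k)
    (hpart : ∀ e : Finset (Fin n),
      e ∈ E ↔ ∀ k : Fin 3, (e.filter fun i => P i = k).card = 1) :
    specRad p E = (27 * (E.card : ℝ)) ^ (1 - 1 / p) / 9 := by
  refine IsGreatest.csSup_eq ⟨?_, ?_⟩
  · exact exists_pNorm_eq_one_polyForm_eq (by linarith) hpart hsurj
  · rintro _ ⟨x, hx, rfl⟩
    exact polyForm_le_of_pNorm_eq_one hp hpart hx
end

section
/- Let G be an r-uniform hypergraph with m ≥ 1 edges. Then the function f_G(p) = (λ^(p)(G) / (r·m))^p is non-increasing in p on [1, ∞). -/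
open Finset

/-- The polynomial form of an `r`-uniform hypergraph. -/
noncomputable def polyFormR {n : ℕ} (r : ℕ) (E : Finset (Finset (Fin n))) (x : Fin n → ℝ) : ℝ :=
  r * ∑ e ∈ E, ∏ i ∈ e, x i

/-- The `p`-spectral radius of an `r`-uniform hypergraph. -/
noncomputable def specRadR {n : ℕ} (r : ℕ) (p : ℝ) (E : Finset (Finset (Fin n))) : ℝ :=
  sSup {t : ℝ | ∃ x : Fin n → ℝ, pNorm p x = 1 ∧ polyFormR r E x = t}

section Aux

variable {n r : ℕ} {E : Finset (Finset (Fin n))}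

lemma sum_abs_rpow_eq_one {p : ℝ} (hp : 0 < p) {x : Fin n → ℝ}
    (h : pNorm p x = 1) : ∑ i, |x i| ^ p = 1 := by
  have h0 : (0:ℝ) ≤ ∑ i, |x i| ^ p :=
    Finset.sum_nonneg fun i _ => Real.rpow_nonneg (abs_nonneg _) _
  have := congrArg (fun t : ℝ => t ^ p) h
  simpa [pNorm, ← Real.rpow_mul h0, one_div, inv_mul_cancel₀ hp.ne'] using this

lemma abs_le_one_of_pnorm {p : ℝ} (hp : 0 < p) {x : Fin n → ℝ}
    (h : pNorm p x = 1) (i : Fin n) : |x i| ≤ 1 := by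
  by_contra hlt
  push_neg at hlt
  have h1 : (1:ℝ) < |x i| ^ p := by
    have := Real.rpow_lt_rpow (by norm_num) hlt hp
    simpa using this
  have h2 : |x i| ^ p ≤ ∑ j, |x j| ^ p :=
    Finset.single_le_sum (fun j _ => Real.rpow_nonneg (abs_nonneg _) _) (Finset.mem_univ i)
  rw [sum_abs_rpow_eq_one hp h] at h2
  linarith

lemma polyFormR_le_card {p : ℝ} (hp : 0 < p) {x : Fin n → ℝ}
    (h : pNorm p x = 1) : polyFormR r E x ≤ (r : ℝ) * E.card := by
  unfold polyFormR
  have : ∑ e ∈ E, ∏ i ∈ e, x i ≤ (E.card : ℝ) := by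
    calc ∑ e ∈ E, ∏ i ∈ e, x i ≤ ∑ e ∈ E, (1:ℝ) := by
          refine Finset.sum_le_sum fun e _ => ?_
          calc ∏ i ∈ e, x i ≤ |∏ i ∈ e, x i| := le_abs_self _
            _ = ∏ i ∈ e, |x i| := by rw [Finset.abs_prod]
            _ ≤ 1 := Finset.prod_le_one (fun i _ => abs_nonneg _)
                  (fun i _ => abs_le_one_of_pnorm hp h i)
      _ = (E.card : ℝ) := by simp
  have hr : (0:ℝ) ≤ (r:ℝ) := Nat.cast_nonneg r
  nlinarith [this]

lemma bddAbove_specSet (p : ℝ) (hp : 0 < p) :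
    BddAbove {t : ℝ | ∃ x : Fin n → ℝ, pNorm p x = 1 ∧ polyFormR r E x = t} := by
  refine ⟨(r : ℝ) * E.card, fun t ht => ?_⟩
  obtain ⟨x, hx, rfl⟩ := ht
  exact polyFormR_le_card hp hx

lemma specSet_nonempty (hn : 0 < n) (p : ℝ) (hp : 0 < p) :
    ∃ t, 0 ≤ t ∧ t ∈ {t : ℝ | ∃ x : Fin n → ℝ, pNorm p x = 1 ∧ polyFormR r E x = t} := by
  set x : Fin n → ℝ := fun i => if i = ⟨0, hn⟩ then 1 else 0 with hxdef
  have hnorm : pNorm p x = 1 := by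
    have : ∑ i, |x i| ^ p = 1 := by
      rw [Finset.sum_eq_single ⟨0, hn⟩]
      · simp [hxdef]
      · intro j _ hj; simp [hxdef, hj, Real.zero_rpow hp.ne']
      · simp
    simp [pNorm, this]
  refine ⟨polyFormR r E x, ?_, x, hnorm, rfl⟩
  unfold polyFormR
  have : (0:ℝ) ≤ ∑ e ∈ E, ∏ i ∈ e, x i := by
    refine Finset.sum_nonneg fun e _ => Finset.prod_nonneg fun i _ => ?_
    by_cases hi : i = ⟨0, hn⟩ <;> simp [hxdef, hi]
  positivity

lemma specRadR_nonneg (hn : 0 < n) (p : ℝ) (hp : 0 < p) :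
    0 ≤ specRadR r p E := by
  obtain ⟨t, ht0, htm⟩ := specSet_nonempty (E := E) (r := r) hn p hp
  exact ht0.trans (le_csSup (bddAbove_specSet p hp) htm)

end Aux

/-- For an `r`-graph `G` with `m ≥ 1` edges, the function `f_G(p) = (λ^(p)(G)/(r·m))^p`
is non-increasing in `p` on `[1, ∞)`. -/
theorem f_nonincreasing {n r : ℕ} (E : Finset (Finset (Fin n)))
    (hE : ∀ e ∈ E, e.card = r) (hm : 1 ≤ E.card)
    (p q : ℝ) (hp : 1 ≤ p) (hpq : p ≤ q) :
    (specRadR r q E / ((r : ℝ) * (E.card : ℝ))) ^ q ≤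
      (specRadR r p E / ((r : ℝ) * (E.card : ℝ))) ^ p := by
  have hq : 1 ≤ q := hp.trans hpq
  have hp0 : (0:ℝ) < p := lt_of_lt_of_le one_pos hp
  have hq0 : (0:ℝ) < q := lt_of_lt_of_le one_pos hq
  rcases Nat.eq_zero_or_pos r with hr0 | hr
  · simp [hr0, Real.zero_rpow hq0.ne', Real.zero_rpow hp0.ne']
  -- r ≥ 1, hence n ≥ 1
  have hn : 0 < n := by
    obtain ⟨e, he⟩ := Finset.card_pos.mp hm
    have hcard : e.card = r := hE e he
    have : e.Nonempty := Finset.card_pos.mp (by omega)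
    obtain ⟨i, -⟩ := this
    exact Nat.lt_of_le_of_lt (Nat.zero_le _) i.isLt
  set m : ℝ := (E.card : ℝ) with hmdef
  have hm0 : (0:ℝ) < m := by exact Nat.cast_pos.mpr hm
  set C : ℝ := (r : ℝ) * m with hCdef
  have hCpos : (0:ℝ) < C := mul_pos (by exact_mod_cast hr) hm0
  have hLp0 : 0 ≤ specRadR r p E := specRadR_nonneg (E := E) hn p hp0
  have hs1 : 1 ≤ q / p := (one_le_div hp0).2 hpq
  have hs0 : (0:ℝ) < q / p := lt_of_lt_of_le one_pos hs1
  -- key inequality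
  have key : specRadR r q E ≤ C * (specRadR r p E / C) ^ (p / q) := by
    obtain ⟨t₀, -, ht₀⟩ := specSet_nonempty (E := E) (r := r) hn q hq0
    refine csSup_le ⟨t₀, ht₀⟩ ?_
    rintro t ⟨x, hx, rfl⟩
    by_cases ht0 : polyFormR r E x ≤ 0
    · exact ht0.trans (by positivity)
    push_neg at ht0
    set t := polyFormR r E x with htdef
    set s : ℝ := q / p with hsdef
    set y : Fin n → ℝ := fun i => |x i| ^ s with hydef
    have hy0 : ∀ i, 0 ≤ y i := fun i => Real.rpow_nonneg (abs_nonneg _) _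
    have hynorm : pNorm p y = 1 := by
      have hterm : ∀ i : Fin n, |y i| ^ p = |x i| ^ q := by
        intro i
        rw [hydef]
        simp only [abs_of_nonneg (Real.rpow_nonneg (abs_nonneg (x i)) s)]
        rw [← Real.rpow_mul (abs_nonneg _), hsdef, div_mul_cancel₀ _ hp0.ne']
      have : ∑ i, |y i| ^ p = 1 := by
        rw [Finset.sum_congr rfl fun i _ => hterm i]
        exact sum_abs_rpow_eq_one hq0 hx
      simp [pNorm, this]
    set a : Finset (Fin n) → ℝ := fun e => ∏ i ∈ e, |x i| with hadef
    have ha0 : ∀ e ∈ E, 0 ≤ a e := fun e _ => Finset.prod_nonneg fun i _ => abs_nonneg _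
    have hPy : polyFormR r E y = (r : ℝ) * ∑ e ∈ E, a e ^ s := by
      unfold polyFormR
      congr 1
      refine Finset.sum_congr rfl fun e _ => ?_
      rw [hadef, ← Real.finset_prod_rpow e _ (fun i _ => abs_nonneg _) s]
    -- convexity
    have hconv : ((m⁻¹) * ∑ e ∈ E, a e) ^ s ≤ m⁻¹ * ∑ e ∈ E, a e ^ s := by
      have := Real.rpow_arith_mean_le_arith_mean_rpow E (fun _ => m⁻¹) a
        (fun _ _ => by positivity) (by simp [Finset.sum_const, hmdef]; field_simp)
        ha0 hs1
      simpa [← Finset.mul_sum] using this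
    have htle : t ≤ (r : ℝ) * ∑ e ∈ E, a e := by
      rw [htdef]
      unfold polyFormR
      refine mul_le_mul_of_nonneg_left ?_ (by positivity)
      refine Finset.sum_le_sum fun e _ => ?_
      calc ∏ i ∈ e, x i ≤ |∏ i ∈ e, x i| := le_abs_self _
        _ = a e := by rw [hadef]; exact Finset.abs_prod e x
    -- t/C ≤ (∑ a)/m
    have hdiv : t / C ≤ m⁻¹ * ∑ e ∈ E, a e := by
      rw [div_le_iff₀ hCpos, hCdef]
      have : m⁻¹ * (∑ e ∈ E, a e) * ((r:ℝ) * m) = (r:ℝ) * ∑ e ∈ E, a e := by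
        field_simp
      rw [this]; exact htle
    have hstep : C * (t / C) ^ s ≤ polyFormR r E y := by
      rw [hPy]
      calc C * (t / C) ^ s ≤ C * ((m⁻¹) * ∑ e ∈ E, a e) ^ s := by
            refine mul_le_mul_of_nonneg_left ?_ hCpos.le
            exact Real.rpow_le_rpow (by positivity) hdiv hs0.le
        _ ≤ C * (m⁻¹ * ∑ e ∈ E, a e ^ s) := mul_le_mul_of_nonneg_left hconv hCpos.le
        _ = (r : ℝ) * ∑ e ∈ E, a e ^ s := by rw [hCdef]; field_simp
    have hmemp : polyFormR r E y ∈
        {t : ℝ | ∃ x : Fin n → ℝ, pNorm p x = 1 ∧ polyFormR r E x = t} :=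
      ⟨y, hynorm, rfl⟩
    have h2 : C * (t / C) ^ s ≤ specRadR r p E :=
      hstep.trans (le_csSup (bddAbove_specSet p hp0) hmemp)
    -- invert
    have h3 : (t / C) ^ s ≤ specRadR r p E / C := by
      rw [le_div_iff₀ hCpos]; linarith [h2]
    have h4 : t / C ≤ (specRadR r p E / C) ^ (1 / s) := by
      have hbase : (0:ℝ) ≤ t / C := by positivity
      calc t / C = ((t / C) ^ s) ^ (1 / s) := by
            rw [← Real.rpow_mul hbase, mul_one_div_cancel hs0.ne', Real.rpow_one]
        _ ≤ (specRadR r p E / C) ^ (1 / s) :=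
            Real.rpow_le_rpow (Real.rpow_nonneg hbase _) h3 (by positivity)
    have hps : 1 / s = p / q := by rw [hsdef]; field_simp
    rw [hps] at h4
    calc t = C * (t / C) := by field_simp
      _ ≤ C * (specRadR r p E / C) ^ (p / q) := mul_le_mul_of_nonneg_left h4 hCpos.le
  -- conclude
  have hbase : specRadR r q E / C ≤ (specRadR r p E / C) ^ (p / q) := by
    rw [div_le_iff₀ hCpos]
    calc specRadR r q E ≤ C * (specRadR r p E / C) ^ (p / q) := key
      _ = (specRadR r p E / C) ^ (p / q) * C := mul_comm _ _
  have hq0' : 0 ≤ specRadR r q E / C :=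
    div_nonneg (specRadR_nonneg (E := E) hn q hq0) hCpos.le
  calc (specRadR r q E / C) ^ q ≤ ((specRadR r p E / C) ^ (p / q)) ^ q :=
        Real.rpow_le_rpow hq0' hbase hq0.le
    _ = (specRadR r p E / C) ^ p := by
        rw [← Real.rpow_mul (by positivity), div_mul_cancel₀ _ hq0.ne']
end
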